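/- Let l, m be positive reals with l ≠ m. There is no preorder ≽ on Δ whose restriction to point-mass lotteries satisfies Lines (i.e., δ_(x,y) ≽ δ_(x',y') if and only if y ≥ −l·x + (l·x' + y') and y ≥ −m·x + (m·x' + y')) and which also satisfies Independence, Unidimensional Expectations, and Negative Dominance. -/

import Mathlib

open scoped BigOperators

noncomputable section

/-- A finite-support lottery on `X`. -/
structure Lottery (X : Type*) where
  val : X →₀ ℝ
  nonneg : ∀ x, 0 ≤ val x
  total : val.sum (fun _ p => p) = 1

namespace Lottery

variable {X : Type*}

/-- The point-mass lottery at `x`. -/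
def delta (x : X) : Lottery X where
  val := Finsupp.single x 1
  nonneg := fun y => by
    classical
    rw [Finsupp.single_apply]
    split <;> norm_num
  total := by
    rw [Finsupp.sum_single_index rfl]

/-- The mixture `α • f + (1 - α) • g`. -/
def mix (α : ℝ) (h1 : 0 ≤ α) (h2 : α ≤ 1) (f g : Lottery X) : Lottery X where
  val := α • f.val + (1 - α) • g.val
  nonneg := fun x => by
    have hf := f.nonneg x
    have hg := g.nonneg x
    simp only [Finsupp.coe_add, Finsupp.coe_smul, Pi.add_apply, Pi.smul_apply, smul_eq_mul]
    nlinarith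
  total := by
    rw [Finsupp.sum_add_index' (fun _ => rfl) (fun _ _ _ => rfl)]
    rw [Finsupp.sum_smul_index (fun _ => rfl), Finsupp.sum_smul_index (fun _ => rfl)]
    rw [← Finsupp.mul_sum, ← Finsupp.mul_sum, f.total, g.total]
    ring

/-- The uniform lottery on `a` and `b`, written `a/b` in the paper. -/
def unif (a b : X) : Lottery X := mix (1/2) (by norm_num) (by norm_num) (delta a) (delta b)

/-- Strict preference. -/
def SPref (R : Lottery X → Lottery X → Prop) (f g : Lottery X) : Prop := R f g ∧ ¬ R g f

/-- Indifference. -/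
def Indiff (R : Lottery X → Lottery X → Prop) (f g : Lottery X) : Prop := R f g ∧ R g f

/-- Incomparability. -/
def Incomp (R : Lottery X → Lottery X → Prop) (f g : Lottery X) : Prop := ¬ R f g ∧ ¬ R g f

/-- Negative Dominance. -/
def NegDominance (R : Lottery X → Lottery X → Prop) : Prop :=
  ∀ f g : Lottery X, SPref R f g →
    ∃ o ∈ f.val.support, ∃ o' ∈ g.val.support, SPref R (delta o) (delta o')

/-- Independence. -/
def Independence (R : Lottery X → Lottery X → Prop) : Prop :=
  ∀ f g h : Lottery X, ∀ α : ℝ, ∀ (h1 : 0 < α) (h2 : α < 1),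
    (R f g ↔ R (mix α h1.le h2.le f h) (mix α h1.le h2.le g h))

/-- The coordinatewise expectation of a lottery on `ℝ²`. -/
def expLot (f : Lottery (ℝ × ℝ)) : ℝ × ℝ :=
  (f.val.sum fun o p => p * o.1, f.val.sum fun o p => p * o.2)

/-- Pareto. -/
def Pareto (R : Lottery (ℝ × ℝ) → Lottery (ℝ × ℝ) → Prop) : Prop :=
  ∀ x y x' y' : ℝ, x' ≤ x → y' ≤ y → R (delta (x, y)) (delta (x', y'))

/-- Converse Pareto. -/
def ConvPareto (R : Lottery (ℝ × ℝ) → Lottery (ℝ × ℝ) → Prop) : Prop :=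
  ∀ x y x' y' : ℝ, R (delta (x, y)) (delta (x', y')) → x' ≤ x ∧ y' ≤ y

/-- Two outcomes are unidimensional with each other if they differ in at most one coordinate. -/
def UniWith {A B : Type*} (o o' : A × B) : Prop := o.1 = o'.1 ∨ o.2 = o'.2

/-- A lottery is unidimensional if any two outcomes in its support are unidimensional
with each other. -/
def Unidim {A B : Type*} (f : Lottery (A × B)) : Prop :=
  ∀ o ∈ f.val.support, ∀ o' ∈ f.val.support, UniWith o o'

/-- Expectationalism. -/
def Expectationalism (R : Lottery (ℝ × ℝ) → Lottery (ℝ × ℝ) → Prop) : Prop :=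
  ∀ f, Indiff R f (delta (expLot f))

/-- Unidimensional Expectations. -/
def UnidimExp (R : Lottery (ℝ × ℝ) → Lottery (ℝ × ℝ) → Prop) : Prop :=
  ∀ f, Unidim f → Indiff R f (delta (expLot f))

end Lottery

open Lottery

/-- The `Lines` relation on ℝ² determined by two lines of slopes `-l` and `-m`. -/
def linesRel (l m : ℝ) (p q : ℝ × ℝ) : Prop :=
  -l * p.1 + (l * q.1 + q.2) ≤ p.2 ∧ -m * p.1 + (m * q.1 + q.2) ≤ p.2

/-! The point `(1, y)` is the mean of `(-1, y)` and `((2 - e) / e, y)` with weights `1 - e` and `e`.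
Substituting this into `½(1, y) + ½(-1, y')` and collapsing the two outcomes at `x = -1`
(Unidimensional Expectations plus Independence) shows that it is indifferent to
`(e / 2)·((2 - e) / e, y) + (1 - e / 2)·(-1, Y)`, where `Y` depends only on `(1 - e) y + y'`.
So if `y' < u'` and `u + u' < y + y'`, choosing `e` with `(1 - e) y + y' = (1 - e) u + u'`
reduces the comparison of `½(1, y) + ½(-1, y')` with `½(1, u) + ½(-1, u')` to the vertical
comparison of `((2 - e) / e, y)` with `((2 - e) / e, u)`, and the first lottery is strictly better.
Similar moves through a four-outcome lottery show that `½(2, z + w) + ½(-2, z - w)` is indifferent to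
`½(1, z + 2w) + ½(-1, z - 2w)`. For `l < m` this yields lotteries `f ≻ g` such that, by Lines, no
outcome of `f` is strictly preferred to an outcome of `g`, contradicting Negative Dominance. -/

namespace Lottery

variable {X : Type*}

theorem ext_val {f g : Lottery X} (h : f.val = g.val) : f = g := by
  cases f; cases g; simp_all

theorem mix_val (α : ℝ) (h0 : 0 ≤ α) (h1 : α ≤ 1) (f g : Lottery X) :
    (mix α h0 h1 f g).val = α • f.val + (1 - α) • g.val := rfl

theorem mix_comm (α : ℝ) (h0 : 0 ≤ α) (h1 : α ≤ 1) (f g : Lottery X) :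
    mix α h0 h1 f g = mix (1 - α) (by linarith) (by linarith) g f :=
  ext_val (by simp only [mix_val]; module)

def half (f g : Lottery X) : Lottery X := mix (1 / 2) (by norm_num) (by norm_num) f g

theorem half_half_half_comm (a b c d : Lottery X) :
    half (half a b) (half c d) = half (half a c) (half b d) :=
  ext_val (by simp only [half, mix_val]; module)

theorem half_mix_eq_mix_mix {e : ℝ} (he0 : 0 < e) (he1 : e < 1) (f g h : Lottery X) :
    half (mix (1 - e) (by linarith) (by linarith) f g) h =
      mix (e / 2) (by linarith) (by linarith) g
        (mix ((1 - e) / (2 - e)) (div_nonneg (by linarith) (by linarith))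
          ((div_le_one (by linarith)).2 (by linarith)) f h) := by
  have h2e : 2 - e ≠ 0 := by linarith
  refine ext_val ?_
  simp only [half, mix_val, smul_add, smul_smul]
  match_scalars <;> field_simp <;> ring

variable {R : Lottery X → Lottery X → Prop} {f f' g g' h : Lottery X}

theorem Indiff.symm (h₁ : Indiff R f g) : Indiff R g f := ⟨h₁.2, h₁.1⟩

theorem Indiff.trans (hR : Transitive R) (h₁ : Indiff R f g) (h₂ : Indiff R g h) :
    Indiff R f h :=
  ⟨hR h₁.1 h₂.1, hR h₂.2 h₁.2⟩

theorem SPref.trans_indiff (hR : Transitive R) (h₁ : SPref R f g) (h₂ : Indiff R g h) :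
    SPref R f h :=
  ⟨hR h₁.1 h₂.1, fun hhf => h₁.2 (hR h₂.1 hhf)⟩

theorem Indiff.trans_sPref (hR : Transitive R) (h₁ : Indiff R f g) (h₂ : SPref R g h) :
    SPref R f h :=
  ⟨hR h₁.1 h₂.1, fun hhf => h₂.2 (hR hhf h₁.1)⟩

theorem Independence.sPref_mix (hind : Independence R) {α : ℝ} (h0 : 0 < α) (h1 : α < 1)
    (hfg : SPref R f g) (h : Lottery X) :
    SPref R (mix α h0.le h1.le f h) (mix α h0.le h1.le g h) :=
  ⟨(hind f g h α h0 h1).1 hfg.1, fun hgf => hfg.2 ((hind g f h α h0 h1).2 hgf)⟩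

theorem Independence.indiff_mix_left (hind : Independence R) {α : ℝ} (h0 : 0 < α) (h1 : α < 1)
    (hf : Indiff R f f') (g : Lottery X) :
    Indiff R (mix α h0.le h1.le f g) (mix α h0.le h1.le f' g) :=
  ⟨(hind f f' g α h0 h1).1 hf.1, (hind f' f g α h0 h1).1 hf.2⟩

theorem Independence.indiff_mix_right (hind : Independence R) {α : ℝ} (h0 : 0 < α) (h1 : α < 1)
    (f : Lottery X) (hg : Indiff R g g') :
    Indiff R (mix α h0.le h1.le f g) (mix α h0.le h1.le f g') := by
  rw [mix_comm, mix_comm α h0.le h1.le f g']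
  exact hind.indiff_mix_left (by linarith) (by linarith) hg f

theorem Independence.indiff_half (hind : Independence R) (hR : Transitive R)
    (hf : Indiff R f f') (hg : Indiff R g g') : Indiff R (half f g) (half f' g') :=
  (hind.indiff_mix_left (by norm_num) (by norm_num) hf g).trans hR
    (hind.indiff_mix_right (by norm_num) (by norm_num) f' hg)

end Lottery

namespace Lottery

theorem eq_or_eq_of_mem_support_mix_delta {X : Type*} {α : ℝ} {h0 : 0 ≤ α} {h1 : α ≤ 1}
    {p q o : X} (ho : o ∈ (mix α h0 h1 (delta p) (delta q)).val.support) : o = p ∨ o = q := by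
  classical
  rcases Finset.mem_union.1 (Finsupp.support_add ho) with h | h
  · exact Or.inl (Finset.mem_singleton.1 (Finsupp.support_single_subset (Finsupp.support_smul h)))
  · exact Or.inr (Finset.mem_singleton.1 (Finsupp.support_single_subset (Finsupp.support_smul h)))

theorem unidim_mix_delta {A B : Type*} {α : ℝ} (h0 : 0 ≤ α) (h1 : α ≤ 1) {p q : A × B}
    (hpq : UniWith p q) : Unidim (mix α h0 h1 (delta p) (delta q)) := by
  intro o ho o' ho'
  rcases eq_or_eq_of_mem_support_mix_delta ho with rfl | rfl <;>
    rcases eq_or_eq_of_mem_support_mix_delta ho' with rfl | rfl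
  exacts [Or.inl rfl, hpq, hpq.imp Eq.symm Eq.symm, Or.inl rfl]

theorem expLot_mix_delta {α : ℝ} (h0 : 0 ≤ α) (h1 : α ≤ 1) (p q : ℝ × ℝ) :
    expLot (mix α h0 h1 (delta p) (delta q)) = α • p + (1 - α) • q := by
  have hval : (mix α h0 h1 (delta p) (delta q)).val =
      Finsupp.single p α + Finsupp.single q (1 - α) := by
    simp only [mix_val, delta, Finsupp.smul_single, smul_eq_mul, mul_one]
  have hsum (F : ℝ × ℝ → ℝ) :
      (Finsupp.single p α + Finsupp.single q (1 - α)).sum (fun o t => t * F o) =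
        α * F p + (1 - α) * F q := by
    rw [Finsupp.sum_add_index' (fun a => zero_mul (F a)) (fun a b₁ b₂ => add_mul b₁ b₂ (F a)),
      Finsupp.sum_single_index (zero_mul (F p)), Finsupp.sum_single_index (zero_mul (F q))]
  rw [expLot, hval, hsum, hsum]
  rfl

section Plane

variable {R : Lottery (ℝ × ℝ) → Lottery (ℝ × ℝ) → Prop}

theorem UnidimExp.indiff_mix_delta (huni : UnidimExp R) {α : ℝ} (h0 : 0 ≤ α) (h1 : α ≤ 1)
    {x y x' y' x'' y'' : ℝ} (hpq : x = x' ∨ y = y') (hx : α * x + (1 - α) * x' = x'')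
    (hy : α * y + (1 - α) * y' = y'') :
    Indiff R (mix α h0 h1 (delta (x, y)) (delta (x', y'))) (delta (x'', y'')) := by
  have h := huni _ (unidim_mix_delta h0 h1 (p := (x, y)) (q := (x', y')) hpq)
  have hpt : α • (x, y) + (1 - α) • (x', y') = (x'', y'') := by simp [← hx, ← hy]
  rwa [expLot_mix_delta, hpt] at h

theorem UnidimExp.indiff_half_delta (huni : UnidimExp R) {x y x' y' x'' y'' : ℝ}
    (hpq : x = x' ∨ y = y') (hx : (x + x') / 2 = x'') (hy : (y + y') / 2 = y'') :
    Indiff R (half (delta (x, y)) (delta (x', y'))) (delta (x'', y'')) :=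
  huni.indiff_mix_delta _ _ hpq (by linarith) (by linarith)

theorem half_delta_indiff_mix (hR : Transitive R) (hind : Independence R) (huni : UnidimExp R)
    {e : ℝ} (he0 : 0 < e) (he1 : e < 1) (y y' : ℝ) :
    Indiff R (half (delta (1, y)) (delta (-1, y')))
      (mix (e / 2) (by linarith) (by linarith) (delta ((2 - e) / e, y))
        (delta (-1, ((1 - e) * y + y') / (2 - e)))) := by
  have h2e : 2 - e ≠ 0 := by linarith
  have hspread : Indiff R (mix (1 - e) (by linarith) (by linarith) (delta (-1, y))
      (delta ((2 - e) / e, y))) (delta (1, y)) :=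
    huni.indiff_mix_delta _ _ (Or.inr rfl) (by field_simp; ring) (by ring)
  have hcollapse : Indiff R (mix ((1 - e) / (2 - e)) (div_nonneg (by linarith) (by linarith))
      ((div_le_one (by linarith)).2 (by linarith)) (delta (-1, y)) (delta (-1, y')))
      (delta (-1, ((1 - e) * y + y') / (2 - e))) :=
    huni.indiff_mix_delta _ _ (Or.inl rfl) (by ring) (by field_simp; ring)
  have h := hind.indiff_mix_left (α := 1 / 2) (by norm_num) (by norm_num) hspread.symm
    (delta (-1, y'))
  change Indiff R _ (half _ _) at h
  rw [half_mix_eq_mix_mix he0 he1] at h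
  exact h.trans hR (hind.indiff_mix_right (by linarith) (by linarith) _ hcollapse)

theorem sPref_half_delta (hR : Transitive R) (hind : Independence R) (huni : UnidimExp R)
    (hup : ∀ x y u : ℝ, u < y → SPref R (delta (x, y)) (delta (x, u)))
    {y y' u u' : ℝ} (hy' : y' < u') (hsum : u + u' < y + y') :
    SPref R (half (delta (1, y)) (delta (-1, y'))) (half (delta (1, u)) (delta (-1, u'))) := by
  have hyu : 0 < y - u := by linarith
  set e := (y + y' - (u + u')) / (y - u)
  have he0 : 0 < e := div_pos (by linarith) hyu
  have he1 : e < 1 := (div_lt_one hyu).2 (by linarith)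
  have htrade : (1 - e) * u + u' = (1 - e) * y + y' := by
    simp only [e]; field_simp; ring
  have hg := half_delta_indiff_mix hR hind huni he0 he1 u u'
  rw [htrade] at hg
  have hx : SPref R (delta ((2 - e) / e, y)) (delta ((2 - e) / e, u)) := hup _ _ _ (by linarith)
  exact (half_delta_indiff_mix hR hind huni he0 he1 y y').trans_sPref hR
    ((hind.sPref_mix (by linarith) (by linarith) hx _).trans_indiff hR hg.symm)

theorem half_delta_indiff_half_delta (hR : Transitive R) (hind : Independence R)
    (huni : UnidimExp R) (z w : ℝ) :
    Indiff R (half (delta (2, z + w)) (delta (-2, z - w)))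
      (half (delta (1, z + 2 * w)) (delta (-1, z - 2 * w))) := by
  have htop : Indiff R (delta (2, z + w)) (half (delta (2, z + 2 * w)) (delta (2, z))) :=
    (huni.indiff_half_delta (Or.inl rfl) (by norm_num) (by ring)).symm
  have hbottom : Indiff R (delta (-2, z - w)) (half (delta (-2, z - 2 * w)) (delta (-2, z))) :=
    (huni.indiff_half_delta (Or.inl rfl) (by norm_num) (by ring)).symm
  have hcentre : Indiff R (half (delta (2, z)) (delta (-2, z)))
      (half (delta (0, z + 2 * w)) (delta (0, z - 2 * w))) :=
    (huni.indiff_half_delta (x'' := 0) (y'' := z) (Or.inr rfl) (by norm_num) (by ring)).trans hR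
      (huni.indiff_half_delta (Or.inl rfl) (by norm_num) (by ring)).symm
  have hright : Indiff R (half (delta (2, z + 2 * w)) (delta (0, z + 2 * w)))
      (delta (1, z + 2 * w)) :=
    huni.indiff_half_delta (Or.inr rfl) (by norm_num) (by ring)
  have hleft : Indiff R (half (delta (-2, z - 2 * w)) (delta (0, z - 2 * w)))
      (delta (-1, z - 2 * w)) :=
    huni.indiff_half_delta (Or.inr rfl) (by norm_num) (by ring)
  have h := hind.indiff_half hR htop hbottom
  rw [half_half_half_comm] at h
  have h' := h.trans hR (hind.indiff_mix_right (by norm_num) (by norm_num) _ hcentre)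
  change Indiff R _ (half _ _) at h'
  rw [half_half_half_comm] at h'
  exact h'.trans hR (hind.indiff_half hR hright hleft)

end Plane

end Lottery

theorem linesRel_comm (l m : ℝ) (p q : ℝ × ℝ) : linesRel l m p q ↔ linesRel m l p q := and_comm

theorem sPref_delta_of_lt {l m : ℝ} {R : Lottery (ℝ × ℝ) → Lottery (ℝ × ℝ) → Prop}
    (hlines : ∀ p q : ℝ × ℝ, R (delta p) (delta q) ↔ linesRel l m p q) {x y u : ℝ} (h : u < y) :
    SPref R (delta (x, y)) (delta (x, u)) := by
  refine ⟨(hlines _ _).2 ⟨by dsimp only; linarith, by dsimp only; linarith⟩, fun hyu => ?_⟩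
  have := ((hlines _ _).1 hyu).1
  dsimp only at this
  linarith

theorem false_of_lines_of_lt {l m : ℝ} (hl : 0 < l) (hlm : l < m)
    {R : Lottery (ℝ × ℝ) → Lottery (ℝ × ℝ) → Prop} (hR : Transitive R)
    (hlines : ∀ p q : ℝ × ℝ, R (delta p) (delta q) ↔ linesRel l m p q)
    (hind : Independence R) (huni : UnidimExp R) (hnd : NegDominance R) : False := by
  set b := (l + m) / 2 with hb
  set z := (l - m) / 4 with hz
  set w := -(l + m) with hw
  -- Each outcome of `½(1, -b) + ½(-1, b)` lies strictly below one of the two lines through each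
  -- outcome of `½(2, z + w) + ½(-2, z - w)`: this is where `l < m` enters.
  have hfg : SPref R (half (delta (1, -b)) (delta (-1, b)))
      (half (delta (1, z + 2 * w)) (delta (-1, z - 2 * w))) :=
    sPref_half_delta hR hind huni (fun _ _ _ => sPref_delta_of_lt hlines) (by linarith)
      (by linarith)
  obtain ⟨o, ho, o', ho', hoo'⟩ :=
    hnd _ _ (hfg.trans_indiff hR (half_delta_indiff_half_delta hR hind huni z w).symm)
  obtain ⟨hl', hm'⟩ := (hlines o o').1 hoo'.1
  rcases eq_or_eq_of_mem_support_mix_delta ho with rfl | rfl <;>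
    rcases eq_or_eq_of_mem_support_mix_delta ho' with rfl | rfl <;>
    · dsimp only at hl' hm'
      linarith

/-- For positive `l ≠ m`, there is no preorder on Δ whose restriction to
point masses satisfies Lines and which also satisfies Independence, Unidimensional
Expectations, and Negative Dominance. -/
theorem statement5 (l m : ℝ) (hl : 0 < l) (hm : 0 < m) (hlm : l ≠ m) :
    ¬ ∃ R : Lottery (ℝ × ℝ) → Lottery (ℝ × ℝ) → Prop,
      Reflexive R ∧ Transitive R ∧
      (∀ p q : ℝ × ℝ, R (delta p) (delta q) ↔ linesRel l m p q) ∧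
      Independence R ∧ UnidimExp R ∧ NegDominance R := by
  rintro ⟨R, -, hR, hlines, hind, huni, hnd⟩
  rcases hlm.lt_or_gt with h | h
  · exact false_of_lines_of_lt hl h hR hlines hind huni hnd
  · exact false_of_lines_of_lt hm h hR (fun p q => (hlines p q).trans (linesRel_comm l m p q))
      hind huni hnd
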